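/- Let (W, S) be a Coxeter system, J, K ⊆ S, and δ : W_J → W_K a group isomorphism with δ(J) = K. If w, w' ∈ ᴶW satisfy w ⪯ w' and ℓ(w) = ℓ(w'), then w = w'. -/

import Mathlib

open CoxeterSystem

variable {B W : Type*} [Group W] {M : CoxeterMatrix B}

/-- The strong Bruhat order on a Coxeter group: the reflexive-transitive closure of the
relation relating `a` to `a * t` where `t` is a reflection and the length increases. -/
def bruhatLE (cs : CoxeterSystem M W) (u v : W) : Prop :=
  Relation.ReflTransGen
    (fun a b => ∃ t : W, cs.IsReflection t ∧ b = a * t ∧ cs.length a < cs.length b) u v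

/-- `ᴶW`: the set of `w` with `ℓ(s w) > ℓ(w)` for all `s ∈ J`, i.e. the minimal length
representatives of the cosets `W_J \ W`. Here `J` is a set of simple reflections of `W`. -/
def minLeft (cs : CoxeterSystem M W) (J : Set W) : Set W :=
  {w | ∀ s ∈ J, cs.length w < cs.length (s * w)}

/-- `Wᴶ`: the set of `w` with `ℓ(w s) > ℓ(w)` for all `s ∈ J`, i.e. the minimal length
representatives of the cosets `W / W_J`. -/
def minRight (cs : CoxeterSystem M W) (J : Set W) : Set W :=
  {w | ∀ s ∈ J, cs.length w < cs.length (w * s)}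

/-- `δ` is a group isomorphism from `W_J` onto `W_K` satisfying `δ(J) = K`, encoded as a
function `W → W` restricting to a multiplicative bijection of the subgroup generated by `J`
onto the subgroup generated by `K`, and mapping the set `J` onto the set `K`. -/
structure IsParabolicIso (J K : Set W) (δ : W → W) : Prop where
  bijOn : Set.BijOn δ (Subgroup.closure J : Set W) (Subgroup.closure K : Set W)
  map_mul : ∀ u ∈ Subgroup.closure J, ∀ v ∈ Subgroup.closure J, δ (u * v) = δ u * δ v
  image_eq : δ '' J = K

/-- The relation `w ⪯ w'`: there exists `u ∈ W_J` with `u⁻¹ * w * δ(u) ≤ w'` in Bruhat order. -/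
def specLE (cs : CoxeterSystem M W) (J : Set W) (δ : W → W) (w w' : W) : Prop :=
  ∃ u ∈ Subgroup.closure J, bruhatLE cs (u⁻¹ * w * δ u) w'

/-!
Write `x = u⁻¹ w δ(u)`. Since `w` is the shortest element of its coset `W_J w`, lengths add
in `u⁻¹ w`; and `ℓ(δ u) ≤ ℓ(u)` because `δ` sends `J` to simple reflections. Hence
`ℓ(x) ≥ ℓ(w) = ℓ(w')`, so `x ≤ w'` forces `x = w'`, i.e. `u w' = w δ(u)`. Peeling the letters
of a reduced `J`-word of `u` off one at a time, the exchange condition applied to `w δ(u)` never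
deletes a letter of `w` (that would be a left descent of `w` in `J`), so it shortens `δ(u)`
instead, and when `u` is used up we are left with `w' = w`.

The exchange condition is derived from the permutation representation of `W` on `W × {±1}`,
which shows that the parity of the number of occurrences of `t` in the right inversion sequence
of a word only depends on the product of the word.
-/

open List

namespace CoxeterSystem

variable (cs : CoxeterSystem M W)

local prefix:100 "s" => cs.simple
local prefix:100 "π" => cs.wordProd
local prefix:100 "ℓ" => cs.length
local prefix:100 "ris" => cs.rightInvSeq

theorem rightInvSeq_alternatingWord (i i' : B) (n : ℕ) :
    ris (alternatingWord i i' n) = ((range n).map fun k => s i' * (s i * s i') ^ k).reverse := by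
  induction n generalizing i i' with
  | zero => simp [alternatingWord]
  | succ n ih =>
    rw [alternatingWord_succ, rightInvSeq_concat, ih, range_succ_eq_map]
    simp [map_reverse, mul_assoc, ← mul_pow_mul, pow_succ']

section SignedConj

variable [DecidableEq W]

def signedConjFun (i : B) (x : W × ℤˣ) : W × ℤˣ :=
  (s i * x.1 * s i, if x.1 = s i then -x.2 else x.2)

theorem signedConjFun_involutive (i : B) : Function.Involutive (cs.signedConjFun i) := by
  rintro ⟨t, ε⟩
  by_cases ht : t = s i <;>
    simp [signedConjFun, ht, mul_assoc, mul_eq_one_iff_eq_inv]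

def signedConj (i : B) : Equiv.Perm (W × ℤˣ) :=
  (cs.signedConjFun_involutive i).toPerm

theorem prod_map_signedConj_apply (ω : List B) (t : W) (ε : ℤˣ) :
    (ω.map cs.signedConj).prod (t, ε) =
      (π ω * t * (π ω)⁻¹, ε * (-1) ^ (ris ω).count t) := by
  induction ω generalizing t ε with
  | nil => simp
  | cons i ω ih =>
    have hflip : π ω * t * (π ω)⁻¹ = s i ↔ (π ω)⁻¹ * s i * π ω = t := by
      constructor <;> intro h <;> rw [← h] <;> group
    simp only [map_cons, prod_cons, Equiv.Perm.mul_apply, ih, signedConj,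
      Function.Involutive.coe_toPerm, signedConjFun, rightInvSeq, count_cons, hflip,
      wordProd_cons, mul_inv_rev, inv_simple, beq_iff_eq]
    refine Prod.ext (by group) ?_
    split_ifs <;> simp [pow_succ]

theorem even_count_rightInvSeq_alternatingWord (i i' : B) (t : W) :
    Even ((ris (alternatingWord i i' (2 * M i i'))).count t) := by
  have hperiodic : ∀ k, s i' * (s i * s i') ^ (M i i' + k) = s i' * (s i * s i') ^ k := by
    intro k
    rw [pow_add, simple_mul_simple_pow, one_mul]
  rw [rightInvSeq_alternatingWord, count_reverse, two_mul, range_add, map_append, map_map]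
  simp only [Function.comp_def, hperiodic, count_append]
  exact Even.add_self _

theorem signedConj_pow_eq_prod (i i' : B) (m : ℕ) :
    (cs.signedConj i * cs.signedConj i') ^ m =
      ((alternatingWord i i' (2 * m)).map cs.signedConj).prod := by
  induction m with
  | zero => simp [alternatingWord]
  | succ m ih =>
    rw [pow_succ, ih, show 2 * (m + 1) = 2 * m + 1 + 1 by ring, alternatingWord_succ,
      alternatingWord_succ]
    simp

theorem isLiftable_signedConj : M.IsLiftable cs.signedConj := by
  intro i i'
  ext1 ⟨t, ε⟩
  have hπ : π (alternatingWord i i' (2 * M i i')) = 1 := by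
    rw [prod_alternatingWord_eq_mul_pow, if_pos (even_two_mul _),
      Nat.mul_div_cancel_left _ two_pos, simple_mul_simple_pow, one_mul]
  rw [signedConj_pow_eq_prod, prod_map_signedConj_apply, hπ,
    (cs.even_count_rightInvSeq_alternatingWord i i' t).neg_one_pow]
  simp

def signedConjRep : W →* Equiv.Perm (W × ℤˣ) :=
  cs.lift ⟨cs.signedConj, cs.isLiftable_signedConj⟩

theorem signedConjRep_wordProd (ω : List B) :
    cs.signedConjRep (π ω) = (ω.map cs.signedConj).prod := by
  induction ω with
  | nil => simp
  | cons i ω ih =>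
    rw [wordProd_cons, map_mul, ih, map_cons, prod_cons, signedConjRep, lift_apply_simple]

theorem neg_one_pow_count_rightInvSeq_eq {ω ω' : List B} (h : π ω = π ω') (t : W) :
    (-1 : ℤˣ) ^ (ris ω).count t = (-1) ^ (ris ω').count t := by
  have hsign (ν : List B) : (cs.signedConjRep (π ν) (t, 1)).2 = (-1) ^ (ris ν).count t := by
    rw [signedConjRep_wordProd, prod_map_signedConj_apply, one_mul]
  rw [← hsign, ← hsign, h]

end SignedConj

theorem simple_mem_rightInvSeq_of_length_mul_simple_lt {ω : List B} {i : B}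
    (h : ℓ (π ω * s i) < ℓ (π ω)) : s i ∈ ris ω := by
  classical
  obtain ⟨ν, hν, hνω⟩ := cs.exists_isReduced (π ω * s i)
  have hνi : π (ν.concat i) = π ω := by
    rw [wordProd_concat, ← hνω, mul_assoc, simple_mul_simple_self, mul_one]
  have hnotmem : s i ∉ ris ν := fun hmem => by
    have := (cs.isRightInversion_of_mem_rightInvSeq hν hmem).2
    rw [← hνω, mul_assoc, simple_mul_simple_self, mul_one] at this
    omega
  have hcount : (ris (ν.concat i)).count (s i) = 1 := by
    rw [rightInvSeq_concat, concat_eq_append, count_append, count_singleton_self,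
      count_eq_zero_of_not_mem]
    simpa [MulAut.conj_apply, mul_assoc, mul_eq_one_iff_eq_inv] using hnotmem
  have hsign := cs.neg_one_pow_count_rightInvSeq_eq hνi (s i)
  by_contra hnot
  rw [hcount, count_eq_zero_of_not_mem hnot] at hsign
  exact absurd hsign (by decide)

theorem exists_simple_mul_wordProd_eq_eraseIdx {ω : List B} {i : B}
    (h : ℓ (s i * π ω) < ℓ (π ω)) : ∃ j < ω.length, s i * π ω = π (ω.eraseIdx j) := by
  have hmem : s i ∈ ris ω.reverse := by
    apply simple_mem_rightInvSeq_of_length_mul_simple_lt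
    rwa [wordProd_reverse, ← inv_simple, ← mul_inv_rev, length_inv, length_inv]
  rw [rightInvSeq_reverse, mem_reverse, mem_iff_getElem] at hmem
  obtain ⟨j, hj, hjs⟩ := hmem
  rw [length_leftInvSeq] at hj
  refine ⟨j, hj, ?_⟩
  rw [← getD_leftInvSeq_mul_wordProd, getD_eq_getElem _ _ (by simpa), hjs]

theorem exists_sublist_isReduced_wordProd_eq (ω : List B) :
    ∃ ω', ω' <+ ω ∧ cs.IsReduced ω' ∧ π ω' = π ω := by
  induction ω with
  | nil => exact ⟨[], Sublist.slnil, by simp [IsReduced], rfl⟩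
  | cons i ω ih =>
    obtain ⟨ω', hsub, hred, hprod⟩ := ih
    rcases cs.length_simple_mul (π ω') i with hlong | hshort
    · refine ⟨i :: ω', hsub.cons_cons i, ?_, by rw [wordProd_cons, wordProd_cons, hprod]⟩
      rw [IsReduced, wordProd_cons, hlong, hred.eq, length_cons]
    · obtain ⟨j, hj, hdel⟩ :=
        cs.exists_simple_mul_wordProd_eq_eraseIdx (show ℓ (s i * π ω') < ℓ (π ω') by omega)
      refine ⟨ω'.eraseIdx j, ((eraseIdx_sublist ω' j).trans hsub).cons i, ?_, by
        rw [← hdel, wordProd_cons, hprod]⟩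
      rw [IsReduced, ← hdel, length_eraseIdx_of_lt hj, ← hred.eq]
      omega

theorem exists_simple_mul_mul_eq_mul {w z : W} {i : B} (hw : ℓ w < ℓ (s i * w))
    (hwz : ℓ (s i * (w * z)) < ℓ (w * z)) : ∃ z', s i * (w * z) = w * z' ∧ ℓ z' < ℓ z := by
  obtain ⟨β, hβ, rfl⟩ := cs.exists_isReduced w
  obtain ⟨γ, hγ, rfl⟩ := cs.exists_isReduced z
  rw [← wordProd_append] at hwz ⊢
  obtain ⟨j, hj, hdel⟩ := cs.exists_simple_mul_wordProd_eq_eraseIdx hwz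
  rw [hdel]
  rcases lt_or_ge j β.length with hjβ | hjβ
  · rw [eraseIdx_append_of_lt_length hjβ, wordProd_append, wordProd_append, ← mul_assoc,
      mul_left_inj] at hdel
    have := cs.length_wordProd_le (β.eraseIdx j)
    rw [length_eraseIdx_of_lt hjβ, ← hdel, ← hβ.eq] at this
    omega
  · rw [length_append] at hj
    refine ⟨π (γ.eraseIdx (j - β.length)),
      by rw [eraseIdx_append_of_length_le hjβ, wordProd_append], ?_⟩
    have := cs.length_wordProd_le (γ.eraseIdx (j - β.length))
    rw [length_eraseIdx_of_lt (show j - β.length < γ.length by omega)] at this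
    have := hγ.eq
    omega

section Parabolic

variable {cs} {J : Set W}

theorem wordProd_mem_closure {ω : List B} (hω : ∀ i ∈ ω, s i ∈ J) :
    π ω ∈ Subgroup.closure J :=
  Subgroup.list_prod_mem _ (by simpa using fun i hi => Subgroup.subset_closure (hω i hi))

theorem exists_wordProd_eq_of_mem_closure (hJ : J ⊆ Set.range cs.simple) {u : W}
    (hu : u ∈ Subgroup.closure J) : ∃ ω : List B, (∀ i ∈ ω, s i ∈ J) ∧ π ω = u := by
  induction hu using Subgroup.closure_induction with
  | mem x hx =>
    obtain ⟨i, rfl⟩ := hJ hx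
    exact ⟨[i], by simpa using hx, wordProd_singleton cs i⟩
  | one => exact ⟨[], by simp, wordProd_nil cs⟩
  | mul x y _ _ ihx ihy =>
    obtain ⟨α, hα, rfl⟩ := ihx
    obtain ⟨β, hβ, rfl⟩ := ihy
    exact ⟨α ++ β, by simpa [or_imp, forall_and] using ⟨hα, hβ⟩, wordProd_append cs α β⟩
  | inv x _ ih =>
    obtain ⟨α, hα, rfl⟩ := ih
    exact ⟨α.reverse, by simpa using hα, wordProd_reverse cs α⟩

theorem exists_isReduced_wordProd_eq_of_mem_closure (hJ : J ⊆ Set.range cs.simple) {u : W}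
    (hu : u ∈ Subgroup.closure J) :
    ∃ ω : List B, (∀ i ∈ ω, s i ∈ J) ∧ cs.IsReduced ω ∧ π ω = u := by
  obtain ⟨α, hα, rfl⟩ := exists_wordProd_eq_of_mem_closure hJ hu
  obtain ⟨ω, hsub, hred, hprod⟩ := cs.exists_sublist_isReduced_wordProd_eq α
  exact ⟨ω, fun i hi => hα i (hsub.subset hi), hred, hprod⟩

theorem exists_simple_mem_length_simple_mul_lt (hJ : J ⊆ Set.range cs.simple) {u : W}
    (hu : u ∈ Subgroup.closure J) (hu1 : u ≠ 1) : ∃ i, s i ∈ J ∧ ℓ (s i * u) < ℓ u := by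
  obtain ⟨_ | ⟨i, α⟩, hα, hred, rfl⟩ := exists_isReduced_wordProd_eq_of_mem_closure hJ hu
  · exact absurd (wordProd_nil cs) hu1
  · refine ⟨i, hα i mem_cons_self, ?_⟩
    rw [wordProd_cons, simple_mul_simple_cancel_left, ← wordProd_cons, hred.eq, length_cons]
    exact (cs.length_wordProd_le α).trans_lt (Nat.lt_succ_self _)

theorem length_mul_of_forall_length_le_length_mul (hJ : J ⊆ Set.range cs.simple) {v x : W}
    (hv : ∀ y ∈ Subgroup.closure J, ℓ v ≤ ℓ (y * v)) (hx : x ∈ Subgroup.closure J) :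
    ℓ (x * v) = ℓ x + ℓ v := by
  -- By minimality of `v = π β` in its coset, a reduced subword of `α ++ β` keeps all of `β`.
  obtain ⟨α, hα, rfl⟩ := exists_wordProd_eq_of_mem_closure hJ hx
  obtain ⟨β, hβ, rfl⟩ := cs.exists_isReduced v
  obtain ⟨ρ, hsub, hρ, hρprod⟩ := cs.exists_sublist_isReduced_wordProd_eq (α ++ β)
  obtain ⟨α', β', rfl, hα', hβ'⟩ := sublist_append_iff.mp hsub
  have hα'J : π α' ∈ Subgroup.closure J := wordProd_mem_closure fun i hi => hα i (hα'.subset hi)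
  have hβ' : β' = β := by
    refine hβ'.eq_of_length_le ?_
    calc β.length = ℓ (π β) := hβ.eq.symm
      _ ≤ ℓ ((π α')⁻¹ * π α * π β) :=
        hv _ (mul_mem (inv_mem hα'J) (wordProd_mem_closure hα))
      _ = ℓ (π β') := by
        rw [mul_assoc, ← wordProd_append, ← hρprod, wordProd_append, inv_mul_cancel_left]
      _ ≤ β'.length := cs.length_wordProd_le β'
  subst β'
  have hα'α : π α' = π α := by simpa [wordProd_append] using hρprod
  refine le_antisymm (cs.length_mul_le _ _) ?_
  calc ℓ (π α) + ℓ (π β) ≤ α'.length + β.length := by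
        rw [← hα'α, hβ.eq]
        exact Nat.add_le_add_right (cs.length_wordProd_le α') _
    _ = ℓ (π α * π β) := by rw [← wordProd_append, ← hρprod, hρ.eq, length_append]

theorem length_le_length_mul_of_mem_minLeft (hJ : J ⊆ Set.range cs.simple) {w : W}
    (hw : w ∈ minLeft cs J) {x : W} (hx : x ∈ Subgroup.closure J) : ℓ w ≤ ℓ (x * w) := by
  -- Take a shortest element `x₀ * w` of the coset: if `x₀ ≠ 1`, lengths add in
  -- `w = x₀⁻¹ * (x₀ * w)`, so a left descent of `x₀⁻¹` in `J` would be one of `w`.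
  obtain ⟨_, ⟨x₀, hx₀, rfl⟩, hmin⟩ := (measure cs.length).wf.has_min
    {v | ∃ y ∈ Subgroup.closure J, y * w = v} ⟨w, 1, one_mem _, one_mul w⟩
  have hv : ∀ y ∈ Subgroup.closure J, ℓ (x₀ * w) ≤ ℓ (y * (x₀ * w)) := fun y hy =>
    not_lt.mp (hmin _ ⟨y * x₀, mul_mem hy hx₀, mul_assoc _ _ _⟩)
  obtain rfl : x₀ = 1 := by
    by_contra hx₀1
    obtain ⟨i, hi, hlt⟩ := exists_simple_mem_length_simple_mul_lt hJ (inv_mem hx₀)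
      (inv_ne_one.mpr hx₀1)
    have hsplit := length_mul_of_forall_length_le_length_mul hJ hv (inv_mem hx₀)
    rw [inv_mul_cancel_left] at hsplit
    have := cs.length_mul_le (s i * x₀⁻¹) (x₀ * w)
    rw [mul_assoc, inv_mul_cancel_left] at this
    have := hw (s i) hi
    omega
  simpa using hv x hx

theorem length_mul_of_mem_minLeft (hJ : J ⊆ Set.range cs.simple) {w x : W}
    (hw : w ∈ minLeft cs J) (hx : x ∈ Subgroup.closure J) : ℓ (x * w) = ℓ x + ℓ w :=
  length_mul_of_forall_length_le_length_mul hJ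
    (fun _ => length_le_length_mul_of_mem_minLeft hJ hw) hx

theorem eq_of_mul_eq_mul_of_mem_minLeft (hJ : J ⊆ Set.range cs.simple) {w w' u z : W}
    (hw : w ∈ minLeft cs J) (hw' : w' ∈ minLeft cs J)
    (hu : u ∈ Subgroup.closure J) (hz : ℓ z ≤ ℓ u) (h : u * w' = w * z) : w = w' := by
  obtain ⟨α, hα, hred, rfl⟩ := exists_isReduced_wordProd_eq_of_mem_closure hJ hu
  clear hu
  induction α generalizing z with
  | nil =>
    obtain rfl : z = 1 := cs.length_eq_zero_iff.mp (by simpa using hz)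
    simpa using h.symm
  | cons i α ih =>
    have hαJ : ∀ j ∈ α, s j ∈ J := fun j hj => hα j (mem_cons_of_mem i hj)
    have hredα : cs.IsReduced α := by simpa using hred.drop 1
    have hlen : ℓ (π (i :: α)) = ℓ (π α) + 1 := by rw [hred.eq, hredα.eq, length_cons]
    have hpeel : s i * (w * z) = π α * w' := by
      rw [← h, wordProd_cons, mul_assoc, simple_mul_simple_cancel_left]
    have hsplit := length_mul_of_mem_minLeft hJ hw' (wordProd_mem_closure hα)
    have := cs.length_mul_le (π α) w'
    obtain ⟨z', hz', hlt⟩ := cs.exists_simple_mul_mul_eq_mul (hw (s i) (hα i mem_cons_self))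
      (by rw [hpeel, ← h]; omega)
    exact ih (z := z') hαJ hredα (by omega) (by rw [← hpeel, hz'])

end Parabolic

end CoxeterSystem

theorem IsParabolicIso.map_one {J K : Set W} {δ : W → W} (hδ : IsParabolicIso J K δ) :
    δ 1 = 1 := by
  simpa using hδ.map_mul 1 (one_mem _) 1 (one_mem _)

theorem IsParabolicIso.length_apply_le {J K : Set W} {δ : W → W} (hδ : IsParabolicIso J K δ)
    {cs : CoxeterSystem M W} (hJ : J ⊆ Set.range cs.simple) (hK : K ⊆ Set.range cs.simple)
    {u : W} (hu : u ∈ Subgroup.closure J) : cs.length (δ u) ≤ cs.length u := by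
  obtain ⟨α, hα, hred, rfl⟩ := exists_isReduced_wordProd_eq_of_mem_closure hJ hu
  rw [hred.eq]
  clear hu hred
  induction α with
  | nil => simp [hδ.map_one]
  | cons i α ih =>
    have hαJ : ∀ j ∈ α, cs.simple j ∈ J := fun j hj => hα j (mem_cons_of_mem i hj)
    obtain ⟨k, hk⟩ := hK (hδ.image_eq ▸ Set.mem_image_of_mem δ (hα i mem_cons_self))
    rw [wordProd_cons, hδ.map_mul _ (Subgroup.subset_closure (hα i mem_cons_self)) _
      (wordProd_mem_closure hαJ), ← hk, length_cons]
    exact (cs.length_mul_le _ _).trans (by rw [length_simple]; have := ih hαJ; omega)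

theorem eq_or_length_lt_of_bruhatLE {cs : CoxeterSystem M W} {u v : W} (h : bruhatLE cs u v) :
    u = v ∨ cs.length u < cs.length v := by
  induction h with
  | refl => exact Or.inl rfl
  | tail _ hstep ih =>
    obtain ⟨_, _, _, hlt⟩ := hstep
    rcases ih with rfl | hlt'
    · exact Or.inr hlt
    · exact Or.inr (hlt'.trans hlt)

/-- If `w, w' ∈ ᴶW` satisfy `w ⪯ w'` and `ℓ(w) = ℓ(w')`, then `w = w'`. -/
theorem eq_of_specLE_of_length_eq (cs : CoxeterSystem M W) (J K : Set W)
    (hJ : J ⊆ Set.range cs.simple) (hK : K ⊆ Set.range cs.simple)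
    (δ : W → W) (hδ : IsParabolicIso J K δ)
    (w w' : W) (hw : w ∈ minLeft cs J) (hw' : w' ∈ minLeft cs J)
    (h : specLE cs J δ w w') (hl : cs.length w = cs.length w') :
    w = w' := by
  obtain ⟨u, hu, hle⟩ := h
  have hδu := hδ.length_apply_le hJ hK hu
  have hconj : u⁻¹ * w * δ u = w' := by
    refine (eq_or_length_lt_of_bruhatLE hle).resolve_right fun hlt => ?_
    have hsplit := length_mul_of_mem_minLeft hJ hw (inv_mem hu)
    have := cs.length_le_length_mul_add_right (u⁻¹ * w) (δ u)
    rw [length_inv] at hsplit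
    omega
  exact eq_of_mul_eq_mul_of_mem_minLeft hJ hw hw' hu hδu (by rw [← hconj]; group)
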